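/- Let μ be the Haar probability measure on SU(2), and let e₀ = (1,0). For a two-qubit vector Ψ = A|00⟩ + B|01⟩ + C|10⟩ + D|11⟩ define E_lin(Ψ) = 2|AD − BC|². Then for every θ ∈ ℝ, the average entangling power of the exchange gate U(θ) = cos θ·I₄ + i sin θ·SWAP over independent Haar-random product inputs satisfies ∫∫ E_lin( U(θ) ((V e₀) ⊗ (W e₀)) ) dμ(V) dμ(W) = (1 − cos 4θ)/12 = sin²(2θ)/6. In particular the entangling power of √SWAP = U(π/4) equals 1/6. -/

import Mathlib

open Matrix Complex MeasureTheory

noncomputable section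

/-- `SU n`: the special unitary group, as the subgroup of the unitary group
`Matrix.unitaryGroup (Fin n) ℂ` consisting of matrices of determinant `1`. -/
def SU (n : ℕ) : Subgroup (Matrix.unitaryGroup (Fin n) ℂ) where
  carrier := {A | (A : Matrix (Fin n) (Fin n) ℂ).det = 1}
  one_mem' := by simp
  mul_mem' := by
    intro a b ha hb
    simp only [Set.mem_setOf_eq, Matrix.UnitaryGroup.mul_val, Matrix.det_mul] at *
    rw [ha, hb, mul_one]
  inv_mem' := by
    intro a ha
    simp only [Set.mem_setOf_eq, Matrix.UnitaryGroup.inv_val] at *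
    rw [Matrix.star_eq_conjTranspose, Matrix.det_conjTranspose, ha, star_one]

/-- The two-qubit SWAP gate on `ℂ² ⊗ ℂ²`. -/
def SWAP : Matrix (Fin 2 × Fin 2) (Fin 2 × Fin 2) ℂ :=
  fun p q => if p = (q.2, q.1) then 1 else 0

/-- The exchange gate `U(θ) = cos θ·I₄ + i sin θ·SWAP`. -/
def U (θ : ℝ) : Matrix (Fin 2 × Fin 2) (Fin 2 × Fin 2) ℂ :=
  (Real.cos θ : ℂ) • (1 : Matrix (Fin 2 × Fin 2) (Fin 2 × Fin 2) ℂ)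
    + (Complex.I * (Real.sin θ : ℂ)) • SWAP

/-- The basis vector `e₀ = (1,0)` of `ℂ²`. -/
def e0 : Fin 2 → ℂ := ![1, 0]

/-- Linear-entropy entanglement of a two-qubit vector `Ψ = A|00⟩+B|01⟩+C|10⟩+D|11⟩`:
`E_lin(Ψ) = 2|AD - BC|²`. -/
def Elin (Ψ : Fin 2 × Fin 2 → ℂ) : ℝ :=
  2 * Complex.normSq (Ψ (0, 0) * Ψ (1, 1) - Ψ (0, 1) * Ψ (1, 0))

/-!
For a product input `v ⊗ w`, `SWAP` exchanges the two factors, so the coefficient determinant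
`AD - BC` of `U(θ)(v ⊗ w)` is `-i sin θ cos θ · (v₀w₁ - v₁w₀)²` and
`E_lin = sin²(2θ)/2 · |v₀w₁ - v₁w₀|⁴`. Substituting `W ↦ VW` in the inner integral and using
`det V = 1` turns `v₀w₁ - v₁w₀` into the entry `γ` of the first column `(α, γ) = We₀`, so the
average is `sin²(2θ)/2 · ∫ |γ|⁴ dμ`.

The moment `∫ |γ|⁴ = 1/3` follows from left invariance alone. The matrix `[[0, -1], [1, 0]]`
swaps `|α|` and `|γ|`. With `z = α γ̄`, pointwise `|α|⁴ + |γ|⁴ = 1 - 2 ((Re z)² + (Im z)²)`,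
while the matrices with first column `((1 + i)/2, ζ (1 - i)/2)`, `ζ ∈ {1, i}`, show that
`∫ (|α|⁴ + |γ|⁴)` equals both `1/2 + 2 ∫ (Re z)²` and `1/2 + 2 ∫ (Im z)²`. Adding the three
relations gives `∫ (|α|⁴ + |γ|⁴) = 2/3`.
-/

open ComplexConjugate

lemma SWAP_mulVec_apply (Ψ : Fin 2 × Fin 2 → ℂ) (p : Fin 2 × Fin 2) :
    (SWAP *ᵥ Ψ) p = Ψ p.swap := by
  simp [SWAP, mulVec, dotProduct, Prod.ext_iff, Fintype.sum_prod_type, ite_and, Prod.swap]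

lemma U_mulVec_apply (θ : ℝ) (Ψ : Fin 2 × Fin 2 → ℂ) (p : Fin 2 × Fin 2) :
    (U θ *ᵥ Ψ) p = Real.cos θ * Ψ p + I * Real.sin θ * Ψ p.swap := by
  simp [U, add_mulVec, smul_mulVec, SWAP_mulVec_apply]

def wedge (v w : Fin 2 → ℂ) : ℂ := v 0 * w 1 - v 1 * w 0

lemma wedge_mulVec (M : Matrix (Fin 2) (Fin 2) ℂ) (v w : Fin 2 → ℂ) :
    wedge (M *ᵥ v) (M *ᵥ w) = M.det * wedge v w := by
  simp only [wedge, mulVec, dotProduct, Fin.sum_univ_two, det_fin_two]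
  ring

lemma wedge_e0 (w : Fin 2 → ℂ) : wedge e0 w = w 1 := by
  simp [wedge, e0]

lemma Elin_U_mulVec_tensor (θ : ℝ) (v w : Fin 2 → ℂ) :
    Elin (U θ *ᵥ fun p => v p.1 * w p.2) = Real.sin (2 * θ) ^ 2 / 2 * normSq (wedge v w) ^ 2 := by
  simp only [Elin, U_mulVec_apply, Prod.swap]
  have h_det : ((Real.cos θ : ℂ) * (v 0 * w 0) + I * Real.sin θ * (v 0 * w 0)) *
        (Real.cos θ * (v 1 * w 1) + I * Real.sin θ * (v 1 * w 1)) -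
      (Real.cos θ * (v 0 * w 1) + I * Real.sin θ * (v 1 * w 0)) *
        (Real.cos θ * (v 1 * w 0) + I * Real.sin θ * (v 0 * w 1)) =
      -(I * (Real.sin θ * Real.cos θ)) * wedge v w ^ 2 := by
    simp only [wedge]
    ring
  rw [h_det]
  simp only [normSq_mul, normSq_neg, normSq_I, normSq_ofReal, map_pow, Real.sin_two_mul]
  ring

lemma normSq_sq_add_normSq_sq_mulVec {α γ : ℂ} (hα : normSq α = 1 / 2) (hγ : normSq γ = 1 / 2)
    {v : Fin 2 → ℂ} (hv : normSq (v 0) + normSq (v 1) = 1) :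
    normSq ((!![α, -conj γ; γ, conj α] *ᵥ v) 0) ^ 2 + normSq ((!![α, -conj γ; γ, conj α] *ᵥ v) 1) ^ 2
      = 1 / 2 + 8 * (α * γ * (v 0 * conj (v 1))).re ^ 2 := by
  set t := (α * γ * (v 0 * conj (v 1))).re
  have h0 : normSq (α * v 0 + -conj γ * v 1) = 1 / 2 - 2 * t := by
    rw [normSq_add, normSq_mul, normSq_mul, normSq_neg, normSq_conj, hα, hγ, map_mul, map_neg,
      conj_conj, show α * v 0 * (-γ * conj (v 1)) = -(α * γ * (v 0 * conj (v 1))) by ring, neg_re]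
    linear_combination hv / 2
  have h1 : normSq (γ * v 0 + conj α * v 1) = 1 / 2 + 2 * t := by
    rw [normSq_add, normSq_mul, normSq_mul, normSq_conj, hα, hγ, map_mul, conj_conj,
      show γ * v 0 * (α * conj (v 1)) = α * γ * (v 0 * conj (v 1)) by ring]
    linear_combination hv / 2
  simp only [mulVec, dotProduct, Fin.sum_univ_two, of_apply, cons_val', cons_val_zero, cons_val_one,
    empty_val', cons_val_fin_one]
  rw [h0, h1]
  ring

namespace SU2

def toMatrix (W : SU 2) : Matrix (Fin 2) (Fin 2) ℂ :=
  ((W : unitaryGroup (Fin 2) ℂ) : Matrix (Fin 2) (Fin 2) ℂ)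

lemma toMatrix_mul (V W : SU 2) : toMatrix (V * W) = toMatrix V * toMatrix W := rfl

lemma det_toMatrix (W : SU 2) : (toMatrix W).det = 1 := W.2

lemma toMatrix_mem_unitaryGroup (W : SU 2) : toMatrix W ∈ unitaryGroup (Fin 2) ℂ := W.1.2

lemma isEmbedding_toMatrix : Topology.IsEmbedding toMatrix :=
  Topology.IsEmbedding.subtypeVal.comp Topology.IsEmbedding.subtypeVal

lemma range_toMatrix :
    Set.range toMatrix = {M : Matrix (Fin 2) (Fin 2) ℂ | M ∈ unitaryGroup (Fin 2) ℂ ∧ M.det = 1} :=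
  Set.ext fun M => ⟨by rintro ⟨W, rfl⟩; exact ⟨toMatrix_mem_unitaryGroup W, det_toMatrix W⟩,
    fun ⟨hU, hd⟩ => ⟨⟨⟨M, hU⟩, hd⟩, rfl⟩⟩

instance : CompactSpace (SU 2) := by
  rw [← isCompact_univ_iff, isEmbedding_toMatrix.isCompact_iff, Set.image_univ]
  refine IsCompact.of_isClosed_subset
    (isCompact_univ_pi fun _ => isCompact_univ_pi fun _ => isCompact_closedBall (0 : ℂ) 1) ?_ ?_
  · rw [range_toMatrix]
    exact isClosed_unitary.inter (isClosed_eq continuous_id.matrix_det continuous_const)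
  · rintro _ ⟨W, rfl⟩ i - j -
    exact mem_closedBall_zero_iff.2 (entry_norm_bound_of_unitary (toMatrix_mem_unitaryGroup W) i j)

def ofColumn (α γ : ℂ) (h : normSq α + normSq γ = 1) : SU 2 :=
  have h' : α * conj α + γ * conj γ = 1 := by rw [mul_conj, mul_conj]; exact_mod_cast h
  ⟨⟨!![α, -conj γ; γ, conj α], by
    rw [mem_unitaryGroup_iff]
    ext i j
    fin_cases i <;> fin_cases j <;>
      simp [mul_apply, Fin.sum_univ_two, mul_comm (conj _), h', add_comm (γ * _)]⟩,
    by
      change det !![α, -conj γ; γ, conj α] = 1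
      rw [det_fin_two_of]
      linear_combination h'⟩

lemma toMatrix_ofColumn (α γ : ℂ) (h : normSq α + normSq γ = 1) :
    toMatrix (ofColumn α γ h) = !![α, -conj γ; γ, conj α] := rfl

def col (W : SU 2) : Fin 2 → ℂ := toMatrix W *ᵥ e0

lemma col_apply (W : SU 2) (i : Fin 2) : col W i = toMatrix W i 0 := by
  simp [col, mulVec, dotProduct, e0]

lemma col_mul (V W : SU 2) : col (V * W) = toMatrix V *ᵥ col W := by
  rw [col, col, toMatrix_mul, mulVec_mulVec]

@[fun_prop]
lemma continuous_col : Continuous col :=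
  (continuous_subtype_val.comp continuous_subtype_val).matrix_mulVec continuous_const

lemma normSq_col_add_normSq_col (W : SU 2) : normSq (col W 0) + normSq (col W 1) = 1 := by
  have h := congrFun₂ (mem_unitaryGroup_iff'.1 (toMatrix_mem_unitaryGroup W)) 0 0
  simp only [mul_apply, Fin.sum_univ_two, star_apply, one_apply_eq, RCLike.star_def,
    ← normSq_eq_conj_mul_self] at h
  rw [col_apply, col_apply]
  exact_mod_cast h

lemma wedge_col_col_mul (V W : SU 2) : wedge (col V) (col (V * W)) = col W 1 := by
  rw [col_mul, col, wedge_mulVec, det_toMatrix, one_mul, wedge_e0]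

section Haar

variable [MeasurableSpace (SU 2)] [BorelSpace (SU 2)] (μ : Measure (SU 2)) [μ.IsMulLeftInvariant]

lemma integral_comp_mulVec_col (g : SU 2) (F : (Fin 2 → ℂ) → ℝ) :
    ∫ W, F (toMatrix g *ᵥ col W) ∂μ = ∫ W, F (col W) ∂μ := by
  simp_rw [← col_mul]
  exact integral_mul_left_eq_self (F ∘ col) g

lemma integral_normSq_col_zero_sq_eq :
    ∫ W, normSq (col W 0) ^ 2 ∂μ = ∫ W, normSq (col W 1) ^ 2 ∂μ := by
  rw [← integral_comp_mulVec_col μ (ofColumn 0 1 (by simp)) fun u => normSq (u 1) ^ 2]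
  simp [toMatrix_ofColumn, mulVec, dotProduct, Fin.sum_univ_two]

lemma integral_normSq_col_sq_add_normSq_col_sq_eq {ζ : ℂ} (hζ : normSq ζ = 1) :
    ∫ W, (normSq (col W 0) ^ 2 + normSq (col W 1) ^ 2) ∂μ
      = ∫ W, (1 / 2 + 2 * (ζ * (col W 0 * conj (col W 1))).re ^ 2) ∂μ := by
  have hα : normSq ((1 + I) / 2) = 1 / 2 := by simp [normSq_apply]; norm_num
  have hγ : normSq (ζ * ((1 - I) / 2)) = 1 / 2 := by
    rw [normSq_mul, hζ, one_mul]; simp [normSq_apply]; norm_num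
  have hαγ (w : ℂ) : ((1 + I) / 2 * (ζ * ((1 - I) / 2)) * w).re = (ζ * w).re / 2 := by
    rw [show (1 + I) / 2 * (ζ * ((1 - I) / 2)) * w = ((1 / 2 : ℝ) : ℂ) * (ζ * w) by
      push_cast; ring_nf; rw [I_sq]; ring, re_ofReal_mul]
    ring
  rw [← integral_comp_mulVec_col μ (ofColumn ((1 + I) / 2) (ζ * ((1 - I) / 2))
    (by rw [hα, hγ]; norm_num)) fun u => normSq (u 0) ^ 2 + normSq (u 1) ^ 2]
  refine integral_congr_ae (ae_of_all _ fun W => ?_)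
  beta_reduce
  rw [toMatrix_ofColumn, normSq_sq_add_normSq_sq_mulVec hα hγ (normSq_col_add_normSq_col W), hαγ]
  ring

theorem integral_normSq_col_one_sq [IsProbabilityMeasure μ] :
    ∫ W, normSq (col W 1) ^ 2 ∂μ = 1 / 3 := by
  have h_re := integral_normSq_col_sq_add_normSq_col_sq_eq μ (ζ := 1) (by simp)
  have h_im := integral_normSq_col_sq_add_normSq_col_sq_eq μ (ζ := I) (by simp)
  simp only [one_mul] at h_re
  simp only [I_mul_re, neg_sq] at h_im
  have h_split (W : SU 2) : normSq (col W 0) ^ 2 + normSq (col W 1) ^ 2 =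
      2 - (1 / 2 + 2 * (col W 0 * conj (col W 1)).re ^ 2)
        - (1 / 2 + 2 * (col W 0 * conj (col W 1)).im ^ 2) := by
    have h := normSq_col_add_normSq_col W
    have hz : normSq (col W 0 * conj (col W 1)) = normSq (col W 0) * normSq (col W 1) := by
      rw [normSq_mul, normSq_conj]
    rw [normSq_apply] at hz
    linear_combination (normSq (col W 0) + normSq (col W 1) + 1) * h + 2 * hz
  have h_sum := integral_congr_ae (ae_of_all μ h_split)
  rw [integral_sub, integral_sub, integral_const, ← h_re, ← h_im, integral_add,
    integral_normSq_col_zero_sq_eq, probReal_univ, smul_eq_mul] at h_sum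
  · linarith
  all_goals exact Continuous.integrable_of_hasCompactSupport (by fun_prop) (.of_compactSpace _)

end Haar

end SU2

/-- The entangling power of the exchange gate `U(θ)` averaged over independent
Haar-random product inputs equals `(1 - cos 4θ)/12 = sin²(2θ)/6`. -/
theorem entangling_power_exchange
    [MeasurableSpace (SU 2)] [BorelSpace (SU 2)]
    (μ : Measure (SU 2)) [μ.IsHaarMeasure] [IsProbabilityMeasure μ] (θ : ℝ) :
    (∫ V : SU 2, ∫ W : SU 2,
        Elin (U θ *ᵥ fun p =>
          (((V : Matrix.unitaryGroup (Fin 2) ℂ) : Matrix (Fin 2) (Fin 2) ℂ) *ᵥ e0) p.1 *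
          (((W : Matrix.unitaryGroup (Fin 2) ℂ) : Matrix (Fin 2) (Fin 2) ℂ) *ᵥ e0) p.2)
      ∂μ ∂μ)
      = (1 - Real.cos (4 * θ)) / 12
    ∧ (1 - Real.cos (4 * θ)) / 12 = Real.sin (2 * θ) ^ 2 / 6 := by
  have h_trig : (1 - Real.cos (4 * θ)) / 12 = Real.sin (2 * θ) ^ 2 / 6 := by
    rw [show 4 * θ = 2 * (2 * θ) by ring, Real.cos_two_mul, ← Real.sin_sq_add_cos_sq (2 * θ)]
    ring
  refine ⟨?_, h_trig⟩
  have h_inner (V : SU 2) :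
      ∫ W, Elin (U θ *ᵥ fun p => SU2.col V p.1 * SU2.col W p.2) ∂μ = Real.sin (2 * θ) ^ 2 / 6 := by
    simp_rw [Elin_U_mulVec_tensor]
    rw [← integral_mul_left_eq_self _ V]
    simp_rw [SU2.wedge_col_col_mul]
    rw [integral_const_mul, SU2.integral_normSq_col_one_sq]
    ring
  change ∫ V, ∫ W, Elin (U θ *ᵥ fun p => SU2.col V p.1 * SU2.col W p.2) ∂μ ∂μ = _
  simp [h_inner, h_trig]
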